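/- Let U satisfy the additivity and nonvanishing conditions of Cresson's criterion, and suppose U · S = A × S with S invertible for the mould product ×. If S is symmetral, then A = S^{×−1} × (U · S) is alternal. -/
import Mathlib


open scoped BigOperators

/-- All shuffle interleavings of two lists, preserving the relative order of each. -/
def shuffles {α : Type*} : List α → List α → List (List α)
  | [], ys => [ys]
  | xs, [] => [xs]
  | x :: xs, y :: ys =>
      ((shuffles xs (y :: ys)).map (x :: ·)) ++ ((shuffles (x :: xs) ys).map (y :: ·))
termination_by xs ys => xs.length + ys.length
decreasing_by all_goals (simp; try omega)

variable {K : Type*} [Field K]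

/-- The shuffle sum of a mould `M` over all interleavings of `a` and `b`. -/
def shSum (M : List K → K) (a b : List K) : K := ((shuffles a b).map M).sum

/-- The mould (concatenation-deconcatenation) product. -/
def mmul (M N : List K → K) (w : List K) : K :=
  ∑ k ∈ Finset.range (w.length + 1), M (w.take k) * N (w.drop k)

/-- The unit mould: `1` in length `0` and `0` otherwise. -/
def one : List K → K := fun l => match l with | [] => 1 | _ => 0

lemma shuffles_nil_left {α : Type*} (b : List α) : shuffles [] b = [b] := by
  simp [shuffles]
lemma shuffles_nil_right {α : Type*} (a : List α) : shuffles a [] = [a] := by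
  cases a <;> simp [shuffles]
lemma shuffles_cons_cons {α : Type*} (x y : α) (xs ys : List α) :
    shuffles (x::xs) (y::ys) =
      ((shuffles xs (y :: ys)).map (x :: ·)) ++ ((shuffles (x :: xs) ys).map (y :: ·)) := by
  simp [shuffles]

lemma mem_shuffles_perm {α : Type*} (s : ℕ) :
    ∀ (a b w : List α), a.length + b.length ≤ s → w ∈ shuffles a b → w.Perm (a ++ b) := by
  induction s with
  | zero =>
    intro a b w h hw
    match a, b with
    | [], b => rw [shuffles_nil_left] at hw; simp at hw; simp [hw]
    | x::a', b => simp at h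
  | succ s ih =>
    intro a b w h hw
    match a, b with
    | [], b => rw [shuffles_nil_left] at hw; simp at hw; simp [hw]
    | x::a', [] => rw [shuffles_nil_right] at hw; simp at hw; simp [hw]
    | x::a', y::b' =>
      rw [shuffles_cons_cons] at hw
      simp only [List.mem_append, List.mem_map] at hw
      rcases hw with ⟨u, hu, rfl⟩ | ⟨u, hu, rfl⟩
      · have hp := ih a' (y::b') u (by simp at h ⊢; omega) hu
        exact hp.cons x
      · have hp := ih (x::a') b' u (by simp at h ⊢; omega) hu
        exact (hp.cons y).trans List.perm_middle.symm

lemma sum_map_add {α : Type*} (l : List α) (f g : α → K) :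
    (l.map (fun w => f w + g w)).sum = (l.map f).sum + (l.map g).sum := by
  induction l with
  | nil => simp
  | cons x xs ih => simp [ih]; ring

lemma sum_map_mul_left {α : Type*} (l : List α) (c : K) (f : α → K) :
    (l.map (fun w => c * f w)).sum = c * (l.map f).sum := by
  induction l with
  | nil => simp
  | cons x xs ih => simp [ih]; ring

lemma shSum_nil_left (M : List K → K) (b : List K) : shSum M [] b = M b := by
  simp [shSum, shuffles_nil_left]
lemma shSum_nil_right (M : List K → K) (a : List K) : shSum M a [] = M a := by
  simp [shSum, shuffles_nil_right]
lemma shSum_cons_cons (M : List K → K) (x y : K) (xs ys : List K) :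
    shSum M (x::xs) (y::ys) =
      shSum (fun v => M (x::v)) xs (y::ys) + shSum (fun v => M (y::v)) (x::xs) ys := by
  simp [shSum, shuffles_cons_cons, List.map_map, Function.comp_def]

lemma mmul_cons (M N : List K → K) (x : K) (w : List K) :
    mmul M N (x::w) = M [] * N (x::w) + mmul (fun v => M (x::v)) N w := by
  simp [mmul, Finset.sum_range_succ']
  ring

lemma shSum_add (f g : List K → K) (a b : List K) :
    shSum (fun w => f w + g w) a b = shSum f a b + shSum g a b := by
  simp [shSum, sum_map_add]

lemma shSum_mul_left (c : K) (f : List K → K) (a b : List K) :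
    shSum (fun w => c * f w) a b = c * shSum f a b := by
  simp [shSum, sum_map_mul_left]

lemma shSum_mmul_nil_left (M N : List K → K) (b : List K) :
    shSum (mmul M N) [] b =
      ∑ k ∈ Finset.range 1, ∑ l ∈ Finset.range (b.length+1),
        shSum M (List.take k ([]:List K)) (b.take l) * shSum N (List.drop k ([]:List K)) (b.drop l) := by
  simp [shSum_nil_left, mmul]

lemma shSum_mmul_nil_right (M N : List K → K) (a : List K) :
    shSum (mmul M N) a [] =
      ∑ k ∈ Finset.range (a.length+1), ∑ l ∈ Finset.range 1,
        shSum M (a.take k) (List.take l ([]:List K)) * shSum N (a.drop k) (List.drop l ([]:List K)) := by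
  simp [shSum_nil_right, shSum_nil_left, mmul]

lemma shSum_mmul (N : List K → K) (s : ℕ) :
    ∀ (M : List K → K) (a b : List K), a.length + b.length ≤ s →
    shSum (mmul M N) a b =
      ∑ k ∈ Finset.range (a.length+1), ∑ l ∈ Finset.range (b.length+1),
        shSum M (a.take k) (b.take l) * shSum N (a.drop k) (b.drop l) := by
  induction s with
  | zero =>
    intro M a b h
    match a, b with
    | [], b => exact shSum_mmul_nil_left M N b
    | x::a', b => simp at h
  | succ s ih =>
    intro M a b h
    match a, b with
    | [], b => exact shSum_mmul_nil_left M N b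
    | x::a', [] => exact shSum_mmul_nil_right M N (x::a')
    | x::a', y::b' =>
      have hx : (a'.length) + (y::b').length ≤ s := by simp at h ⊢; omega
      have hy : (x::a').length + b'.length ≤ s := by simp at h ⊢; omega
      have L1 : shSum (mmul M N) (x::a') (y::b')
          = M [] * shSum N (x::a') (y::b')
            + shSum (mmul (fun v => M (x::v)) N) a' (y::b')
            + shSum (mmul (fun v => M (y::v)) N) (x::a') b' := by
        rw [shSum_cons_cons]
        have e1 : (fun v => mmul M N (x::v)) =
            (fun v => M [] * N (x::v) + mmul (fun u => M (x::u)) N v) := by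
          funext v; exact mmul_cons M N x v
        have e2 : (fun v => mmul M N (y::v)) =
            (fun v => M [] * N (y::v) + mmul (fun u => M (y::u)) N v) := by
          funext v; exact mmul_cons M N y v
        rw [e1, e2, shSum_add, shSum_add, shSum_mul_left, shSum_mul_left,
          shSum_cons_cons N x y a' b']
        ring
      rw [L1, ih (fun v => M (x::v)) a' (y::b') hx, ih (fun v => M (y::v)) (x::a') b' hy]
      simp only [List.length_cons, Finset.sum_range_succ', List.take_succ_cons,
        List.drop_succ_cons, List.take_zero, List.drop_zero, shSum_cons_cons,
        shSum_nil_left, shSum_nil_right, add_mul, Finset.sum_add_distrib]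
      ring

/-- with `U` as in Cresson's criterion and `S` ×-invertible and symmetral,
`A = S^{×−1} × (U · S)` is alternal. -/
theorem stmt8 {K : Type*} [Field K] (U A S Sinv : List K → K)
    (hU0 : U [] = 0)
    (hUadd : ∀ a b : List K, a ≠ [] → b ≠ [] → U (a ++ b) = U a + U b)
    (hUne : ∀ l : List K, l ≠ [] → U l ≠ 0)
    (hS0 : S [] = 1)
    (hinv : ∀ w : List K, mmul Sinv S w = one w ∧ mmul S Sinv w = one w)
    (hUS : ∀ w : List K, U w * S w = mmul A S w)
    (hA : ∀ w : List K, A w = mmul Sinv (fun v => U v * S v) w)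
    (hSsym : ∀ a b : List K, a ≠ [] → b ≠ [] → shSum S a b = S a * S b) :
    ∀ a b : List K, a ≠ [] → b ≠ [] → shSum A a b = 0 := by
  have hAS : ∀ w, mmul A S w = U w * S w := fun w => (hUS w).symm
  have hA0 : A [] = 0 := by
    have h := hUS []
    simp [mmul, hU0, hS0] at h
    exact h.symm
  have hUsum : ∀ l : List K, U l = (l.map fun z => U [z]).sum := by
    intro l
    induction l with
    | nil => simpa using hU0
    | cons x xs ih =>
      cases xs with
      | nil => simp
      | cons y ys =>
        rw [show (x::y::ys) = [x] ++ (y::ys) from rfl,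
          hUadd [x] (y::ys) (by simp) (by simp)]
        simp [ih]
  have hUshuf : ∀ (a b w : List K), a ≠ [] → b ≠ [] → w ∈ shuffles a b → U w = U a + U b := by
    intro a b w ha hb hw
    have hp := mem_shuffles_perm (a.length + b.length) a b w le_rfl hw
    rw [← hUadd a b ha hb, hUsum w, hUsum (a ++ b)]
    exact List.Perm.sum_eq (hp.map _)
  have hSsym' : ∀ c d : List K, shSum S c d = S c * S d := by
    intro c d
    match c, d with
    | [], d => simp [shSum_nil_left, hS0]
    | x::c', [] => simp [shSum_nil_right, hS0]
    | x::c', y::d' => exact hSsym _ _ (by simp) (by simp)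
  have key : ∀ s : ℕ, ∀ a b : List K, a ≠ [] → b ≠ [] → a.length + b.length ≤ s →
      shSum A a b = 0 := by
    intro s
    induction s with
    | zero =>
      intro a b ha hb h
      cases a with
      | nil => exact absurd rfl ha
      | cons x a' => simp at h
    | succ s ih =>
      intro a b ha hb h
      -- two computations of shSum (mmul A S) a b
      have h1 : shSum (mmul A S) a b = (U a + U b) * (S a * S b) := by
        have hcong : (shuffles a b).map (mmul A S)
            = (shuffles a b).map (fun w => (U a + U b) * S w) := by
          apply List.map_congr_left
          intro w hw
          rw [hAS w, hUshuf a b w ha hb hw]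
        unfold shSum
        rw [hcong, sum_map_mul_left]
        rw [show ((shuffles a b).map S).sum = shSum S a b from rfl, hSsym' a b]
      have h2 := shSum_mmul S (a.length + b.length) A a b le_rfl
      -- evaluate pieces of the double sum
      have split : (∑ k ∈ Finset.range (a.length+1), ∑ l ∈ Finset.range (b.length+1),
            shSum A (a.take k) (b.take l) * shSum S (a.drop k) (b.drop l))
          = ((∑ k ∈ Finset.range a.length, ∑ l ∈ Finset.range b.length,
              shSum A (a.take (k+1)) (b.take (l+1)) * shSum S (a.drop (k+1)) (b.drop (l+1)))
            + (∑ k ∈ Finset.range a.length,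
              shSum A (a.take (k+1)) (b.take 0) * shSum S (a.drop (k+1)) (b.drop 0)))
            + (∑ l ∈ Finset.range (b.length+1),
              shSum A (a.take 0) (b.take l) * shSum S (a.drop 0) (b.drop l)) := by
        rw [Finset.sum_range_succ']
        congr 1
        rw [← Finset.sum_add_distrib]
        exact Finset.sum_congr rfl (fun k _ => Finset.sum_range_succ' _ _)
      have E1 : (∑ l ∈ Finset.range (b.length+1),
            shSum A (a.take 0) (b.take l) * shSum S (a.drop 0) (b.drop l))
          = S a * (U b * S b) := by
        have : ∀ l, shSum A (a.take 0) (b.take l) * shSum S (a.drop 0) (b.drop l)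
            = S a * (A (b.take l) * S (b.drop l)) := by
          intro l
          simp only [List.take_zero, List.drop_zero, shSum_nil_left, hSsym']
          ring
        rw [Finset.sum_congr rfl (fun l _ => this l), ← Finset.mul_sum]
        rw [show (∑ l ∈ Finset.range (b.length+1), A (b.take l) * S (b.drop l)) = mmul A S b from rfl]
        rw [hAS b]
      have E2 : (∑ k ∈ Finset.range a.length,
            shSum A (a.take (k+1)) (b.take 0) * shSum S (a.drop (k+1)) (b.drop 0))
          = U a * S a * S b := by
        have : ∀ k, shSum A (a.take (k+1)) (b.take 0) * shSum S (a.drop (k+1)) (b.drop 0)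
            = (A (a.take (k+1)) * S (a.drop (k+1))) * S b := by
          intro k
          simp only [List.take_zero, List.drop_zero, shSum_nil_right, hSsym']
          ring
        rw [Finset.sum_congr rfl (fun k _ => this k), ← Finset.sum_mul]
        have hm : (∑ k ∈ Finset.range a.length, A (a.take (k+1)) * S (a.drop (k+1)))
            = mmul A S a := by
          rw [mmul, Finset.sum_range_succ']
          simp [hA0]
        rw [hm, hAS a]
      have E3 : (∑ k ∈ Finset.range a.length, ∑ l ∈ Finset.range b.length,
            shSum A (a.take (k+1)) (b.take (l+1)) * shSum S (a.drop (k+1)) (b.drop (l+1)))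
          = shSum A a b := by
        have hna : 1 ≤ a.length := List.length_pos_iff.mpr ha
        have hnb : 1 ≤ b.length := List.length_pos_iff.mpr hb
        have hzero : ∀ k ∈ Finset.range a.length, ∀ l ∈ Finset.range b.length,
            ¬(k = a.length - 1 ∧ l = b.length - 1) →
            shSum A (a.take (k+1)) (b.take (l+1)) * shSum S (a.drop (k+1)) (b.drop (l+1)) = 0 := by
          intro k hk l hl hne
          simp only [Finset.mem_range] at hk hl
          have h0 : shSum A (a.take (k+1)) (b.take (l+1)) = 0 := by
            apply ih
            · rw [← List.length_pos_iff]
              simp [List.length_take]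
              omega
            · rw [← List.length_pos_iff]
              simp [List.length_take]
              omega
            · simp only [List.length_take]
              omega
          rw [h0, zero_mul]
        rw [Finset.sum_eq_single_of_mem (a.length - 1)
          (Finset.mem_range.mpr (by omega))]
        · rw [Finset.sum_eq_single_of_mem (b.length - 1)
            (Finset.mem_range.mpr (by omega))]
          · have hta : a.take (a.length - 1 + 1) = a := by
              rw [show a.length - 1 + 1 = a.length by omega, List.take_length]
            have htb : b.take (b.length - 1 + 1) = b := by
              rw [show b.length - 1 + 1 = b.length by omega, List.take_length]
            have hda : a.drop (a.length - 1 + 1) = [] := by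
              rw [show a.length - 1 + 1 = a.length by omega, List.drop_length]
            have hdb : b.drop (b.length - 1 + 1) = [] := by
              rw [show b.length - 1 + 1 = b.length by omega, List.drop_length]
            rw [hta, htb, hda, hdb, hSsym', hS0]
            ring
          · intro l hl hlne
            exact hzero _ (Finset.mem_range.mpr (by omega)) l hl (by tauto)
        · intro k hk hkne
          apply Finset.sum_eq_zero
          intro l hl
          exact hzero k hk l hl (by tauto)
      rw [split, E1, E2, E3] at h2
      rw [h1] at h2
      linear_combination -h2
  intro a b ha hb
  exact key (a.length + b.length) a b ha hb le_rfl
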